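/- For the Suslov system with I₁₃ = I₂₃ = 0, the system ẋᵢ = γ₃{xᵢ, E} is satisfied, where E = ½(I₁₁ω₁² + I₂₂ω₂²) + b₁γ₁ + b₂γ₂ + b₃γ₃ and the bracket is defined by {ω₁, γ₂} = −1/I₁₁, {ω₂, γ₁} = 1/I₂₂, {ω₁, γ₃} = γ₂/(I₁₁γ₃), {ω₂, γ₃} = −γ₁/(I₂₂γ₃) (all other basic brackets zero, extended by the Leibniz rule and antisymmetry). Moreover, F₁ = γ₁² + γ₂² + γ₃² has zero bracket with every coordinate function (it is a Casimir). -/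

import Mathlib

/-!
Coordinates are `x = (ω₁, ω₂, γ₁, γ₂, γ₃)`. Both `E` and `|γ|²` are diagonal quadratic
functions of the coordinates, so their gradients are read off termwise. The two claims then
become the matrix identities `v = γ₃ J ∇E` and `Jᵀ ∇|γ|² = 0`, checked entrywise; `γ₃ ≠ 0`
is what cancels the `1/γ₃` entries of `J`.
-/

open Matrix

section DiagonalQuadratic

variable {𝕜 ι : Type*} [NontriviallyNormedField 𝕜] [Fintype ι]

theorem hasFDerivAt_sum_mul_sq_add_mul (a b x : ι → 𝕜) :
    HasFDerivAt (fun y : ι → 𝕜 => ∑ k, (a k * y k ^ 2 + b k * y k))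
      (∑ k, (2 * a k * x k + b k) •
        ContinuousLinearMap.proj (R := 𝕜) (φ := fun _ : ι => 𝕜) k) x := by
  refine HasFDerivAt.fun_sum fun k _ => ?_
  have hk := hasFDerivAt_apply (𝕜 := 𝕜) k x
  convert ((hk.pow 2).const_mul (a k)).fun_add (hk.const_mul (b k)) using 1
  rw [Nat.add_one_sub_one, pow_one, two_smul]
  module

theorem fderiv_sum_mul_sq_add_mul_apply_single [DecidableEq ι] (a b x : ι → 𝕜) (j : ι) :
    fderiv 𝕜 (fun y : ι → 𝕜 => ∑ k, (a k * y k ^ 2 + b k * y k)) x (Pi.single j 1)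
      = 2 * a j * x j + b j := by
  simp [(hasFDerivAt_sum_mul_sq_add_mul a b x).fderiv, Pi.single_apply]

end DiagonalQuadratic

noncomputable section Suslov

variable (I11 I22 b1 b2 b3 : ℝ)

def suslovField (x : Fin 5 → ℝ) : Fin 5 → ℝ :=
  ![(b3 * x 3 - b2 * x 4) / I11,
    (b1 * x 4 - b3 * x 2) / I22,
    -x 4 * x 1,
    x 4 * x 0,
    x 2 * x 1 - x 3 * x 0]

def suslovPoisson (x : Fin 5 → ℝ) : Matrix (Fin 5) (Fin 5) ℝ :=
  !![0, 0, 0, -(1 / I11), x 3 / (I11 * x 4);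
     0, 0, 1 / I22, 0, -(x 2 / (I22 * x 4));
     0, -(1 / I22), 0, 0, 0;
     1 / I11, 0, 0, 0, 0;
     -(x 3 / (I11 * x 4)), x 2 / (I22 * x 4), 0, 0, 0]

def suslovEnergy (x : Fin 5 → ℝ) : ℝ :=
  (1 / 2) * (I11 * x 0 ^ 2 + I22 * x 1 ^ 2) + b1 * x 2 + b2 * x 3 + b3 * x 4

def gammaNormSq (x : Fin 5 → ℝ) : ℝ := x 2 ^ 2 + x 3 ^ 2 + x 4 ^ 2

theorem fderiv_suslovEnergy_apply_single (x : Fin 5 → ℝ) (j : Fin 5) :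
    fderiv ℝ (suslovEnergy I11 I22 b1 b2 b3) x (Pi.single j 1)
      = ![I11 * x 0, I22 * x 1, b1, b2, b3] j := by
  have hE : suslovEnergy I11 I22 b1 b2 b3 = fun y => ∑ k,
      (![I11 / 2, I22 / 2, 0, 0, 0] k * y k ^ 2 + ![0, 0, b1, b2, b3] k * y k) := by
    ext y
    simp [suslovEnergy, Fin.sum_univ_five]
    ring
  rw [hE, fderiv_sum_mul_sq_add_mul_apply_single]
  fin_cases j <;> simp [mul_div_cancel₀]

theorem fderiv_gammaNormSq_apply_single (x : Fin 5 → ℝ) (j : Fin 5) :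
    fderiv ℝ gammaNormSq x (Pi.single j 1) = ![0, 0, 2 * x 2, 2 * x 3, 2 * x 4] j := by
  have hF : gammaNormSq = fun y => ∑ k, (![0, 0, 1, 1, 1] k * y k ^ 2 + 0 * y k) := by
    ext y
    simp [gammaNormSq, Fin.sum_univ_five]
  rw [hF, fderiv_sum_mul_sq_add_mul_apply_single]
  fin_cases j <;> simp

variable {I11 I22} {x : Fin 5 → ℝ}

theorem suslovField_eq_smul_suslovPoisson_mulVec (hI11 : I11 ≠ 0) (hI22 : I22 ≠ 0)
    (hx : x 4 ≠ 0) :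
    suslovField I11 I22 b1 b2 b3 x
      = x 4 • suslovPoisson I11 I22 x *ᵥ ![I11 * x 0, I22 * x 1, b1, b2, b3] := by
  ext i
  fin_cases i <;>
    simp [suslovField, suslovPoisson, -mul_eq_mul_left_iff] <;>
    field_simp <;> ring

theorem suslovPoisson_transpose_mulVec_gradient_gammaNormSq (hx : x 4 ≠ 0) :
    (suslovPoisson I11 I22 x)ᵀ *ᵥ ![0, 0, 2 * x 2, 2 * x 3, 2 * x 4] = 0 := by
  ext i
  fin_cases i <;>
    simp [suslovPoisson, mulVec, dotProduct, Fin.sum_univ_five] <;>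
    field_simp <;> ring

end Suslov

/-- The Suslov system with `I₁₃ = I₂₃ = 0` has the conformally Hamiltonian form
`ẋᵢ = γ₃ {xᵢ, E}` for the given Poisson matrix `J`, and `F₁ = γ²` is a Casimir. -/
theorem suslov_conformally_hamiltonian
    (I11 I22 b1 b2 b3 : ℝ) (hI11 : 0 < I11) (hI22 : 0 < I22)
    (v : (Fin 5 → ℝ) → (Fin 5 → ℝ))
    (hv : v = fun x => ![(b3 * x 3 - b2 * x 4) / I11,
                          (b1 * x 4 - b3 * x 2) / I22,
                          -x 4 * x 1,
                          x 4 * x 0,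
                          x 2 * x 1 - x 3 * x 0])
    (J : (Fin 5 → ℝ) → Matrix (Fin 5) (Fin 5) ℝ)
    (hJ : J = fun x =>
      !![0, 0, 0, -(1 / I11), x 3 / (I11 * x 4);
         0, 0, 1 / I22, 0, -(x 2 / (I22 * x 4));
         0, -(1 / I22), 0, 0, 0;
         1 / I11, 0, 0, 0, 0;
         -(x 3 / (I11 * x 4)), x 2 / (I22 * x 4), 0, 0, 0])
    (E : (Fin 5 → ℝ) → ℝ)
    (hE : E = fun x => (1 / 2) * (I11 * x 0 ^ 2 + I22 * x 1 ^ 2)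
      + b1 * x 2 + b2 * x 3 + b3 * x 4)
    (F1 : (Fin 5 → ℝ) → ℝ)
    (hF1 : F1 = fun x => x 2 ^ 2 + x 3 ^ 2 + x 4 ^ 2) :
    ∀ x : Fin 5 → ℝ, x 4 ≠ 0 →
      (∀ i, v x i = x 4 * ∑ j, J x i j * fderiv ℝ E x (Pi.single j 1)) ∧
      (∀ i, ∑ j, J x j i * fderiv ℝ F1 x (Pi.single j 1) = 0) := by
  obtain rfl : v = suslovField I11 I22 b1 b2 b3 := hv
  obtain rfl : J = suslovPoisson I11 I22 := hJ
  obtain rfl : E = suslovEnergy I11 I22 b1 b2 b3 := hE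
  obtain rfl : F1 = gammaNormSq := hF1
  intro x hx
  refine ⟨fun i => ?_, fun i => ?_⟩
  · simp only [fderiv_suslovEnergy_apply_single]
    exact congrFun (suslovField_eq_smul_suslovPoisson_mulVec b1 b2 b3 hI11.ne' hI22.ne' hx) i
  · simp only [fderiv_gammaNormSq_apply_single]
    exact congrFun (suslovPoisson_transpose_mulVec_gradient_gammaNormSq hx) i
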